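/- For any measure π on path space, the energy I(π) = E_{γ∼π} E(γ) satisfies I(π) = sup_Π I^Π(π), where I^Π(π) = E_{γ∼π} E^Π(γ) and the supremum is over all finite partitions Π of [0,T]; here it is assumed π-almost every path is continuous. -/

import Mathlib

open Finset Set MeasureTheory ENNReal

/-- A finite partition `0 = t₀ < t₁ < ⋯ < t_n = T` of `[0,T]`. -/
structure TimePartition (T : ℝ) where
  n : ℕ
  npos : 0 < n
  t : ℕ → ℝ
  mono : ∀ i < n, t i < t (i + 1)
  first : t 0 = 0
  last : t n = T

/-- The energy of a path `γ` with respect to a partition: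
`E^Π(γ) = (1/2)∑ᵢ |γ(tᵢ)-γ(tᵢ₋₁)|²/(tᵢ-tᵢ₋₁)`. -/
noncomputable def partEnergy {T : ℝ} (γ : ℝ → ℝ) (P : TimePartition T) : ℝ :=
  (1 / 2) * ∑ i ∈ Finset.range P.n, (γ (P.t (i + 1)) - γ (P.t i)) ^ 2 / (P.t (i + 1) - P.t i)

/-- The energy of a path: `E(γ) = sup_Π E^Π(γ) ∈ [0,∞]`. -/
noncomputable def pathEnergy (T : ℝ) (γ : ℝ → ℝ) : ℝ≥0∞ :=
  ⨆ P : TimePartition T, ENNReal.ofReal (partEnergy γ P)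

open Filter Topology

/-!
Refining a partition can only increase `E^Π`: on each cell of the coarser partition this is
Sedrakyan's form of Cauchy–Schwarz, `(∑ aⱼ)² / ∑ sⱼ ≤ ∑ aⱼ² / sⱼ`. For a path continuous on
`[0,T]`, `E^Π` depends continuously on the points of `Π`, so `E(γ)` is already the supremum
over the partitions whose interior points are rational. These form a countable family, directed
under common refinement, and monotone convergence exchanges that supremum with the integral.
-/

theorem sq_sub_div_sub_le_sum_Ico {𝕜 : Type*} [Field 𝕜] [LinearOrder 𝕜]
    [IsStrictOrderedRing 𝕜] (f u : ℕ → 𝕜) {a b : ℕ} (hab : a ≤ b)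
    (hu : ∀ j ∈ Finset.Ico a b, u j < u (j + 1)) :
    (f b - f a) ^ 2 / (u b - u a) ≤
      ∑ j ∈ Finset.Ico a b, (f (j + 1) - f j) ^ 2 / (u (j + 1) - u j) := by
  rw [← sum_Ico_sub f hab, ← sum_Ico_sub u hab]
  exact sq_sum_div_le_sum_sq_div _ _ fun j hj => sub_pos.2 (hu j hj)

theorem sum_range_sum_Ico_eq_sum_Ico {M : Type*} [AddCommMonoid M] (g : ℕ → M)
    {φ : ℕ → ℕ} {n : ℕ} (hφ : MonotoneOn φ (Set.Iic n)) :
    ∑ i ∈ range n, ∑ j ∈ Finset.Ico (φ i) (φ (i + 1)), g j =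
      ∑ j ∈ Finset.Ico (φ 0) (φ n), g j := by
  induction n with
  | zero => simp
  | succ n ih =>
    rw [sum_range_succ, ih (hφ.mono (Iic_subset_Iic.2 n.le_succ)),
      sum_Ico_consecutive _ (hφ (Nat.zero_le (n + 1)) n.le_succ (Nat.zero_le n))
        (hφ n.le_succ Set.self_mem_Iic n.le_succ)]

theorem strictMonoOn_Iic_of_lt_add_one {α : Type*} [Preorder α] {u : ℕ → α} {n : ℕ}
    (hu : ∀ i < n, u i < u (i + 1)) : StrictMonoOn u (Set.Iic n) :=
  strictMonoOn_Iic_of_lt_succ fun i hi => by rw [Order.succ_eq_add_one]; exact hu i hi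

theorem mem_Icc_of_lt_add_one {α : Type*} [Preorder α] {u : ℕ → α} {n i : ℕ}
    (hu : ∀ j < n, u j < u (j + 1)) (hi : i ≤ n) : u i ∈ Icc (u 0) (u n) :=
  have h := (strictMonoOn_Iic_of_lt_add_one hu).monotoneOn
  ⟨h (Nat.zero_le n) hi (Nat.zero_le i), h hi Set.self_mem_Iic hi⟩

namespace TimePartition

variable {T : ℝ}

theorem strictMonoOn (P : TimePartition T) : StrictMonoOn P.t (Set.Iic P.n) :=
  strictMonoOn_Iic_of_lt_add_one P.mono

theorem t_mem_Icc (P : TimePartition T) {i : ℕ} (hi : i ≤ P.n) : P.t i ∈ Icc 0 T := by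
  simpa only [P.first, P.last] using mem_Icc_of_lt_add_one P.mono hi

def points (P : TimePartition T) : Set ℝ := P.t '' Set.Iic P.n

theorem partEnergy_le_of_points_subset (γ : ℝ → ℝ) {P R : TimePartition T}
    (h : P.points ⊆ R.points) : partEnergy γ P ≤ partEnergy γ R := by
  set φ : ℕ → ℕ := fun i => Function.invFunOn R.t (Set.Iic R.n) (P.t i)
  have hφ_mem : ∀ i ≤ P.n, φ i ≤ R.n := fun i hi =>
    Function.invFunOn_mem (h ⟨i, hi, rfl⟩)
  have hφ_t : ∀ i ≤ P.n, R.t (φ i) = P.t i := fun i hi =>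
    Function.invFunOn_eq (h ⟨i, hi, rfl⟩)
  have hφ_mono : StrictMonoOn φ (Set.Iic P.n) := fun i hi j hj hij =>
    (R.strictMonoOn.lt_iff_lt (hφ_mem i hi) (hφ_mem j hj)).1 <| by
      rw [hφ_t i hi, hφ_t j hj]; exact P.strictMonoOn hi hj hij
  have hφ_zero : φ 0 = 0 :=
    R.strictMonoOn.injOn (hφ_mem 0 (Nat.zero_le _)) (Nat.zero_le R.n) <| by
      rw [hφ_t 0 (Nat.zero_le _), P.first, R.first]
  have hφ_last : φ P.n = R.n := R.strictMonoOn.injOn (hφ_mem P.n le_rfl) Set.self_mem_Iic <| by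
    rw [hφ_t P.n le_rfl, P.last, R.last]
  unfold partEnergy
  gcongr 1 / 2 * ?_
  calc ∑ i ∈ range P.n, (γ (P.t (i + 1)) - γ (P.t i)) ^ 2 / (P.t (i + 1) - P.t i)
      = ∑ i ∈ range P.n,
          (γ (R.t (φ (i + 1))) - γ (R.t (φ i))) ^ 2 / (R.t (φ (i + 1)) - R.t (φ i)) := by
        refine sum_congr rfl fun i hi => ?_
        rw [hφ_t i (mem_range.1 hi).le, hφ_t (i + 1) (mem_range.1 hi)]
    _ ≤ ∑ i ∈ range P.n, ∑ j ∈ Finset.Ico (φ i) (φ (i + 1)),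
          (γ (R.t (j + 1)) - γ (R.t j)) ^ 2 / (R.t (j + 1) - R.t j) := by
        refine sum_le_sum fun i hi => ?_
        have hi : i < P.n := mem_range.1 hi
        refine sq_sub_div_sub_le_sum_Ico (γ ∘ R.t) R.t
          (hφ_mono hi.le (Nat.succ_le_of_lt hi) i.lt_succ_self).le fun j hj => R.mono j ?_
        exact (mem_Ico.1 hj).2.trans_le (hφ_mem (i + 1) hi)
    _ = ∑ j ∈ range R.n, (γ (R.t (j + 1)) - γ (R.t j)) ^ 2 / (R.t (j + 1) - R.t j) := by
        rw [sum_range_sum_Ico_eq_sum_Ico _ hφ_mono.monotoneOn, hφ_zero, hφ_last, range_eq_Ico]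

noncomputable def ofFinset (hT : 0 < T) (S : Finset ℝ) (h0 : 0 ∈ S) (hTS : T ∈ S)
    (hS : ↑S ⊆ Icc 0 T) : TimePartition T where
  n := S.card - 1
  npos := by have := Finset.one_lt_card.2 ⟨0, h0, T, hTS, hT.ne⟩; omega
  t i := if h : i < S.card then S.orderEmbOfFin rfl ⟨i, h⟩ else T
  mono i hi := by
    rw [dif_pos (by omega), dif_pos (by omega)]
    exact (S.orderEmbOfFin rfl).strictMono (Fin.mk_lt_mk.2 i.lt_succ_self)
  first := by
    have hS0 : 0 < S.card := card_pos.2 ⟨0, h0⟩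
    rw [dif_pos hS0, orderEmbOfFin_zero rfl hS0]
    exact le_antisymm (min'_le S 0 h0) (le_min' S _ _ fun x hx => (hS hx).1)
  last := by
    have hS0 : 0 < S.card := card_pos.2 ⟨0, h0⟩
    rw [dif_pos (by omega), orderEmbOfFin_last rfl hS0]
    exact le_antisymm (max'_le S _ _ fun x hx => (hS hx).2) (le_max' S T hTS)

theorem points_ofFinset (hT : 0 < T) (S : Finset ℝ) (h0 : 0 ∈ S) (hTS : T ∈ S)
    (hS : ↑S ⊆ Icc 0 T) : (ofFinset hT S h0 hTS hS).points = S := by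
  have hS0 : 0 < S.card := card_pos.2 ⟨0, h0⟩
  ext x
  constructor
  · rintro ⟨i, hi, rfl⟩
    have hi : i < S.card := by simp only [ofFinset, Set.mem_Iic] at hi; omega
    simp only [ofFinset, dif_pos hi, mem_coe]
    exact orderEmbOfFin_mem S rfl _
  · intro hx
    obtain ⟨k, rfl⟩ : x ∈ Set.range (S.orderEmbOfFin rfl) := by
      rwa [range_orderEmbOfFin]
    refine ⟨k, by simp only [ofFinset, Set.mem_Iic]; omega, ?_⟩
    simp only [ofFinset, dif_pos k.2]

end TimePartition

noncomputable def ratPoints (T : ℝ) (s : Finset ℚ) : Finset ℝ :=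
  insert 0 (insert T ((s.image (↑)).filter (· ∈ Icc 0 T)))

theorem zero_mem_ratPoints (T : ℝ) (s : Finset ℚ) : (0 : ℝ) ∈ ratPoints T s :=
  mem_insert_self _ _

theorem mem_ratPoints_self (T : ℝ) (s : Finset ℚ) : T ∈ ratPoints T s :=
  mem_insert_of_mem (mem_insert_self _ _)

theorem coe_mem_ratPoints {T : ℝ} {s : Finset ℚ} {r : ℚ} (hr : r ∈ s)
    (hrT : (r : ℝ) ∈ Icc 0 T) : (r : ℝ) ∈ ratPoints T s :=
  mem_insert_of_mem (mem_insert_of_mem (mem_filter.2 ⟨mem_image_of_mem _ hr, hrT⟩))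

theorem ratPoints_subset_Icc {T : ℝ} (hT : 0 ≤ T) (s : Finset ℚ) :
    ↑(ratPoints T s) ⊆ Icc 0 T := by
  intro x hx
  simp only [ratPoints, coe_insert, coe_filter, Set.mem_insert_iff, Set.mem_ofPred_eq] at hx
  rcases hx with rfl | rfl | ⟨-, hx⟩
  exacts [⟨le_rfl, hT⟩, ⟨hT, le_rfl⟩, hx]

theorem ratPoints_mono (T : ℝ) : Monotone (ratPoints T) := fun _ _ h =>
  insert_subset_insert _ (insert_subset_insert _ (filter_subset_filter _ (image_subset_image h)))

namespace TimePartition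

variable {T : ℝ}

noncomputable def ofRat (hT : 0 < T) (s : Finset ℚ) : TimePartition T :=
  ofFinset hT (ratPoints T s) (zero_mem_ratPoints T s) (mem_ratPoints_self T s)
    (ratPoints_subset_Icc hT.le s)

theorem points_ofRat (hT : 0 < T) (s : Finset ℚ) : (ofRat hT s).points = ratPoints T s :=
  points_ofFinset ..

theorem monotone_partEnergy_ofRat (hT : 0 < T) (γ : ℝ → ℝ) :
    Monotone fun s => partEnergy γ (ofRat hT s) := fun _ _ h =>
  partEnergy_le_of_points_subset γ <| by
    rw [points_ofRat, points_ofRat]; exact coe_subset.2 (ratPoints_mono T h)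

theorem tendsto_partEnergy_of_tendsto {ι : Type*} {l : Filter ι} {γ : ℝ → ℝ}
    (hγ : ContinuousOn γ (Icc 0 T)) (P : TimePartition T) {u : ι → ℕ → ℝ}
    (hu : ∀ i ≤ P.n, Tendsto (fun k => u k i) l (𝓝[Icc 0 T] (P.t i))) :
    Tendsto (fun k => 1 / 2 * ∑ i ∈ range P.n,
      (γ (u k (i + 1)) - γ (u k i)) ^ 2 / (u k (i + 1) - u k i)) l (𝓝 (partEnergy γ P)) := by
  have hγu : ∀ i ≤ P.n, Tendsto (fun k => γ (u k i)) l (𝓝 (γ (P.t i))) := fun i hi =>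
    (hγ _ (P.t_mem_Icc hi)).tendsto.comp (hu i hi)
  have hu' : ∀ i ≤ P.n, Tendsto (fun k => u k i) l (𝓝 (P.t i)) := fun i hi =>
    (hu i hi).mono_right nhdsWithin_le_nhds
  refine (tendsto_finsetSum _ fun i hi => ?_).const_mul _
  have hi : i < P.n := mem_range.1 hi
  exact (((hγu (i + 1) hi).sub (hγu i hi.le)).pow 2).div ((hu' (i + 1) hi).sub (hu' i hi.le))
    (sub_pos.2 (P.mono i hi)).ne'

theorem ofReal_partEnergy_le_iSup_ofRat (hT : 0 < T) {γ : ℝ → ℝ}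
    (hγ : ContinuousOn γ (Icc 0 T)) (P : TimePartition T) :
    ENNReal.ofReal (partEnergy γ P) ≤
      ⨆ s : Finset ℚ, ENNReal.ofReal (partEnergy γ (ofRat hT s)) := by
  choose q _ _ hq using fun i =>
    Rat.denseRange_cast.exists_seq_strictMono_tendsto Rat.cast_mono (P.t i)
  set u : ℕ → ℕ → ℝ := fun k i => if 0 < i ∧ i < P.n then q i k else P.t i
  have hu_ends : ∀ k, u k 0 = 0 ∧ u k P.n = T := fun k => by simp [u, P.first, P.last]
  have hu : ∀ i, Tendsto (fun k => u k i) atTop (𝓝 (P.t i)) := by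
    intro i
    by_cases h : 0 < i ∧ i < P.n
    · simp only [u, if_pos h]; exact hq i
    · simp only [u, if_neg h]; exact tendsto_const_nhds
  have hmono : ∀ᶠ k in atTop, ∀ i < P.n, u k i < u k (i + 1) := by
    simpa using (eventually_all_finset (range P.n)).2 fun i hi =>
      (hu i).eventually_lt (hu (i + 1)) (P.mono i (mem_range.1 hi))
  have hIcc : ∀ᶠ k in atTop, ∀ i ≤ P.n, u k i ∈ Icc 0 T := hmono.mono fun k hk i hi => by
    simpa only [(hu_ends k).1, (hu_ends k).2] using mem_Icc_of_lt_add_one hk hi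
  have hE := tendsto_partEnergy_of_tendsto hγ P fun i hi =>
    tendsto_nhdsWithin_iff.2 ⟨hu i, hIcc.mono fun k hk => hk i hi⟩
  refine le_of_tendsto ((ENNReal.continuous_ofReal.tendsto _).comp hE) (hmono.mono fun k hk => ?_)
  let Q : TimePartition T := ⟨P.n, P.npos, u k, hk, (hu_ends k).1, (hu_ends k).2⟩
  refine le_iSup_of_le ((range P.n).image fun i => q i k)
    (ENNReal.ofReal_le_ofReal (partEnergy_le_of_points_subset (P := Q) γ ?_))
  rw [points_ofRat]
  rintro _ ⟨i, hi, rfl⟩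
  have hQi : u k i ∈ Icc 0 T := Q.t_mem_Icc hi
  show u k i ∈ ratPoints T _
  by_cases h : 0 < i ∧ i < P.n
  · simp only [u, if_pos h] at hQi ⊢
    exact coe_mem_ratPoints (mem_image_of_mem _ (mem_range.2 h.2)) hQi
  · obtain rfl | rfl : i = 0 ∨ i = P.n := by have : i ≤ P.n := hi; omega
    · rw [(hu_ends k).1]; exact zero_mem_ratPoints T _
    · rw [(hu_ends k).2]; exact mem_ratPoints_self T _

theorem pathEnergy_le_iSup_ofRat (hT : 0 < T) {γ : ℝ → ℝ} (hγ : ContinuousOn γ (Icc 0 T)) :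
    pathEnergy T γ ≤ ⨆ s : Finset ℚ, ENNReal.ofReal (partEnergy γ (ofRat hT s)) :=
  iSup_le (ofReal_partEnergy_le_iSup_ofRat hT hγ)

end TimePartition

theorem measurable_partEnergy {T : ℝ} (P : TimePartition T) :
    Measurable fun γ : ℝ → ℝ => partEnergy γ P := by
  unfold partEnergy
  fun_prop

open TimePartition

theorem energy_eq_iSup_partition_energy_general (T : ℝ) (hT : 0 < T)
    (π : Measure (ℝ → ℝ))
    (hcont : ∀ᵐ γ ∂π, ContinuousOn γ (Icc 0 T)) :
    ∫⁻ γ, pathEnergy T γ ∂π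
      = ⨆ P : TimePartition T, ∫⁻ γ, ENNReal.ofReal (partEnergy γ P) ∂π := by
  refine le_antisymm ?_ (iSup_le fun P => lintegral_mono fun γ =>
    le_iSup (fun P : TimePartition T => ENNReal.ofReal (partEnergy γ P)) P)
  have hdir : Directed (· ≤ ·) fun s γ => ENNReal.ofReal (partEnergy γ (ofRat hT s)) :=
    Monotone.directed_le fun s s' h γ =>
      ENNReal.ofReal_le_ofReal (monotone_partEnergy_ofRat hT γ h)
  calc ∫⁻ γ, pathEnergy T γ ∂π
      ≤ ∫⁻ γ, ⨆ s : Finset ℚ, ENNReal.ofReal (partEnergy γ (ofRat hT s)) ∂π :=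
        lintegral_mono_ae (hcont.mono fun γ hγ => pathEnergy_le_iSup_ofRat hT hγ)
    _ = ⨆ s : Finset ℚ, ∫⁻ γ, ENNReal.ofReal (partEnergy γ (ofRat hT s)) ∂π :=
        lintegral_iSup_directed
          (fun _ => (measurable_partEnergy _).ennreal_ofReal.aemeasurable) hdir
    _ ≤ ⨆ P : TimePartition T, ∫⁻ γ, ENNReal.ofReal (partEnergy γ P) ∂π :=
        iSup_le fun s => le_iSup_of_le (ofRat hT s) le_rfl

/-- For a probability measure `π` on path space whose paths are a.e. continuous,
the energy `I(π) = E_{γ∼π} E(γ)` equals the supremum over finite partitions `Π`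
of the approximate energies `I^Π(π) = E_{γ∼π} E^Π(γ)`. -/
theorem energy_eq_iSup_partition_energy (T : ℝ) (hT : 0 < T)
    (π : Measure (ℝ → ℝ)) [IsProbabilityMeasure π]
    (hcont : ∀ᵐ γ ∂π, ContinuousOn γ (Icc 0 T))
    (hrange : ∀ᵐ γ ∂π, ∀ t ∈ Icc (0 : ℝ) T, γ t ∈ Icc (0 : ℝ) 1) :
    ∫⁻ γ, pathEnergy T γ ∂π
      = ⨆ P : TimePartition T, ∫⁻ γ, ENNReal.ofReal (partEnergy γ P) ∂π :=
  energy_eq_iSup_partition_energy_general T hT π hcont
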